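/- Let G = {G^L | G^R} be a short dicotic game and let A be a left option of G that is reversible through B = 0 (that is, 0 is a right option of A and 0 ≼ G (mod D⁻)). Then: (1) if there is a left option C ∈ G^L \ {A} that is a winning first move for Left under misère play (i.e., o(C) ∈ {L, P}), then G = {G^L \ {A} | G^R} (mod D⁻); (2) if A is the only left option of G that is a winning first move for Left, then G = {*, G^L \ {A} | G^R} (mod D⁻), where * = {0 | 0}. -/

import Mathlib

namespace SetTheory

universe u

/-- Combinatorial pre-games, as in Mathlib (Dec 2024), removed from current Mathlib. -/
inductive PGame : Type (u + 1)
  | mk : ∀ α β : Type u, (α → PGame) → (β → PGame) → PGame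

namespace PGame

def LeftMoves : PGame → Type u
  | mk l _ _ _ => l

def RightMoves : PGame → Type u
  | mk _ r _ _ => r

def moveLeft : ∀ g : PGame, LeftMoves g → PGame
  | mk _l _ L _ => L

def moveRight : ∀ g : PGame, RightMoves g → PGame
  | mk _ _r _ R => R

inductive IsOption : PGame → PGame → Prop
  | moveLeft {x : PGame} (i : x.LeftMoves) : IsOption (x.moveLeft i) x
  | moveRight {x : PGame} (i : x.RightMoves) : IsOption (x.moveRight i) x

def Identical : PGame.{u} → PGame.{u} → Prop
  | mk _ _ xL xR, mk _ _ yL yR =>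
    Relator.BiTotal (fun i j => Identical (xL i) (yL j)) ∧
      Relator.BiTotal (fun i j => Identical (xR i) (yR j))

instance : Zero PGame :=
  ⟨⟨PEmpty, PEmpty, PEmpty.elim, PEmpty.elim⟩⟩

def star : PGame.{u} :=
  ⟨PUnit, PUnit, fun _ => 0, fun _ => 0⟩

def neg : PGame → PGame
  | ⟨l, r, L, R⟩ => ⟨r, l, fun i => neg (R i), fun i => neg (L i)⟩

instance : Neg PGame :=
  ⟨neg⟩

noncomputable def add (x y : PGame) : PGame := by
  induction x generalizing y with | mk xl xr _ _ IHxl IHxr => _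
  induction y with | mk yl yr yL yR IHyl IHyr => _
  have y := mk yl yr yL yR
  refine ⟨xl ⊕ yl, xr ⊕ yr, Sum.rec ?_ ?_, Sum.rec ?_ ?_⟩
  · exact fun i => IHxl i y
  · exact IHyl
  · exact fun i => IHxr i y
  · exact IHyr

noncomputable instance : Add PGame.{u} :=
  ⟨add⟩

noncomputable def birthday : PGame.{u} → Ordinal.{u}
  | ⟨_, _, xL, xR⟩ =>
    max (Ordinal.lsub.{u, u} fun i => birthday (xL i)) (Ordinal.lsub.{u, u} fun i => birthday (xR i))

theorem birthday_moveLeft_lt {x : PGame} (i : x.LeftMoves) :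
    (x.moveLeft i).birthday < x.birthday := by
  cases x; rw [birthday]; exact lt_max_of_lt_left (Ordinal.lt_lsub _ i)

theorem birthday_moveRight_lt {x : PGame} (i : x.RightMoves) :
    (x.moveRight i).birthday < x.birthday := by
  cases x; rw [birthday]; exact lt_max_of_lt_right (Ordinal.lt_lsub _ i)

end PGame

end SetTheory

open SetTheory PGame

namespace MisereDicot

def Follower (G' G : PGame) : Prop := Relation.ReflTransGen PGame.IsOption G' G

def IsShort (G : PGame) : Prop :=
  ∀ G', Follower G' G → Finite G'.LeftMoves ∧ Finite G'.RightMoves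

def Dicot (G : PGame) : Prop :=
  ∀ G', Follower G' G → (IsEmpty G'.LeftMoves ↔ IsEmpty G'.RightMoves)

mutual
def LeftWinsFirst (G : PGame) : Prop :=
  IsEmpty G.LeftMoves ∨ ∃ i, ¬ RightWinsFirst (G.moveLeft i)
termination_by G.birthday
decreasing_by exact PGame.birthday_moveLeft_lt i

def RightWinsFirst (G : PGame) : Prop :=
  IsEmpty G.RightMoves ∨ ∃ j, ¬ LeftWinsFirst (G.moveRight j)
termination_by G.birthday
decreasing_by exact PGame.birthday_moveRight_lt j
end

inductive MOutcome : Type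
  | L | N | P | R
deriving DecidableEq

instance : LE MOutcome := ⟨fun a b => a = b ∨ a = .R ∨ b = .L⟩

noncomputable def outcome (G : PGame) : MOutcome := by
  classical
  exact if LeftWinsFirst G then (if RightWinsFirst G then .N else .L)
        else (if RightWinsFirst G then .R else .P)

def Dge (G H : PGame) : Prop :=
  ∀ X : PGame, IsShort X → Dicot X → outcome (H + X) ≤ outcome (G + X)

def Deq (G H : PGame) : Prop :=
  ∀ X : PGame, IsShort X → Dicot X → outcome (G + X) = outcome (H + X)

def Dgt (G H : PGame) : Prop := Dge G H ∧ ¬ Deq G H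

def DInvertible (G : PGame) : Prop :=
  ∃ H : PGame, IsShort H ∧ Dicot H ∧ Deq (G + H) 0

/-- The left option `G^L_i` is reversible through its right option `(G^L_i)^R_j ≼ G`. -/
def LeftReversibleAt (G : PGame) (i : G.LeftMoves) (j : (G.moveLeft i).RightMoves) : Prop :=
  Dge G ((G.moveLeft i).moveRight j)

def RightReversibleAt (G : PGame) (j : G.RightMoves) (i : (G.moveRight j).LeftMoves) : Prop :=
  Dge ((G.moveRight j).moveLeft i) G

/-- `G` has a dominated left option (removable by the Domination theorem). -/
def LeftDominated (G : PGame) : Prop :=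
  ∃ i i' : G.LeftMoves, ¬ (G.moveLeft i).Identical (G.moveLeft i') ∧
    Dge (G.moveLeft i') (G.moveLeft i)

def RightDominated (G : PGame) : Prop :=
  ∃ j j' : G.RightMoves, ¬ (G.moveRight j).Identical (G.moveRight j') ∧
    Dge (G.moveRight j) (G.moveRight j')

/-- `G` has a non-atomic reversible left option (bypassable). -/
def LeftNonAtomicReversible (G : PGame) : Prop :=
  ∃ i j, LeftReversibleAt G i j ∧ Nonempty ((G.moveLeft i).moveRight j).LeftMoves

def RightNonAtomicReversible (G : PGame) : Prop :=
  ∃ j i, RightReversibleAt G j i ∧ Nonempty ((G.moveRight j).moveLeft i).RightMoves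

/-- `G` has an atomic-reversible left option to which the atomic-reversibility
replacement applies nontrivially (i.e. changing the set of options): either some
other left option is a winning first move for Left (so the option is removable),
or the option is not already `*`. -/
def LeftAtomicReducible (G : PGame) : Prop :=
  ∃ i j, LeftReversibleAt G i j ∧ IsEmpty ((G.moveLeft i).moveRight j).LeftMoves ∧
    ((∃ i', ¬ (G.moveLeft i').Identical (G.moveLeft i) ∧ ¬ RightWinsFirst (G.moveLeft i')) ∨
      ¬ (G.moveLeft i).Identical star)

def RightAtomicReducible (G : PGame) : Prop :=
  ∃ j i, RightReversibleAt G j i ∧ IsEmpty ((G.moveRight j).moveLeft i).RightMoves ∧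
    ((∃ j', ¬ (G.moveRight j').Identical (G.moveRight j) ∧ ¬ LeftWinsFirst (G.moveRight j')) ∨
      ¬ (G.moveRight j).Identical star)

/-- The Substitution theorem applies to `G`: `G = {A | C}` with `A` an
atomic-reversible left option and `C` an atomic-reversible right option. -/
def SubstitutionReducible (G : PGame) : Prop :=
  (∀ i i' : G.LeftMoves, (G.moveLeft i).Identical (G.moveLeft i')) ∧
  (∀ j j' : G.RightMoves, (G.moveRight j).Identical (G.moveRight j')) ∧
  (∃ i j, LeftReversibleAt G i j ∧ IsEmpty ((G.moveLeft i).moveRight j).LeftMoves) ∧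
  (∃ j i, RightReversibleAt G j i ∧ IsEmpty ((G.moveRight j).moveLeft i).RightMoves)

/-- `G` is in canonical form: no follower admits any of the misère-dicot
simplifications (domination, non-atomic reversibility, atomic reversibility,
substitution) producing an equivalent game with a different set of options. -/
def CanonicalForm (G : PGame) : Prop :=
  ∀ G', Follower G' G →
    ¬ (LeftDominated G' ∨ RightDominated G' ∨
       LeftNonAtomicReversible G' ∨ RightNonAtomicReversible G' ∨
       LeftAtomicReducible G' ∨ RightAtomicReducible G' ∨
       SubstitutionReducible G')

/-- The game `*2 = {0, * | 0, *}`. -/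
def star2 : PGame :=
  PGame.mk Bool Bool (fun b => cond b star 0) (fun b => cond b star 0)

open Classical in
/-- The adjoint `G°` of `G`. -/
noncomputable def adjoint : PGame → PGame
  | PGame.mk l r L R =>
    if IsEmpty l ∧ IsEmpty r then star
    else if IsEmpty l then PGame.mk r PUnit (fun j => adjoint (R j)) (fun _ => 0)
    else if IsEmpty r then PGame.mk PUnit l (fun _ => 0) (fun i => adjoint (L i))
    else PGame.mk r l (fun j => adjoint (R j)) (fun i => adjoint (L i))

/-- A universe of short games: a class closed under taking options, disjunctive
sums and conjugates. -/
structure GameUniverse where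
  mem : PGame → Prop
  short_mem : ∀ G, mem G → IsShort G
  isOption_mem : ∀ G G', mem G → PGame.IsOption G' G → mem G'
  add_mem : ∀ G H, mem G → mem H → mem (G + H)
  neg_mem : ∀ G, mem G → mem (-G)

/-- `G ≽ H` modulo the universe `U`. -/
def UGe (U : GameUniverse) (G H : PGame) : Prop :=
  ∀ X : PGame, U.mem X → outcome (H + X) ≤ outcome (G + X)

/-- `G = H` modulo the universe `U`. -/
def UEq (U : GameUniverse) (G H : PGame) : Prop :=
  ∀ X : PGame, U.mem X → outcome (G + X) = outcome (H + X)

/-- `G ≻ H` modulo the universe `U`. -/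
def UGt (U : GameUniverse) (G H : PGame) : Prop := UGe U G H ∧ ¬ UEq U G H

/-- `J` is invertible in the universe `U`. -/
def UInvertible (U : GameUniverse) (J : PGame) : Prop :=
  ∃ J' : PGame, U.mem J' ∧ UEq U (J + J') 0

/-!
In `G + X`, Right answers Left's move to `A` by moving to `0`, after which Left moves first in
`X`; `0 ≼ G` says that Left then also wins `G + X`, so the move to `A` gains her nothing.
The same inequality `0 ≼ K` holds for the reduced game `K` as soon as `K` keeps a left option
that Left wins moving second: once Left runs out of moves in `X`, she plays that option.
With `0 ≼ G` and `0 ≼ K`, induction on `X` shows that `G + X` and `K + X` have the same outcome,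
since every left option that only one of `G`, `K` has is reversible through `0`.
In part (2) the option `*` plays this role.
-/

end MisereDicot

namespace SetTheory.PGame

@[elab_as_elim]
theorem moveRecOn {C : PGame → Prop} (x : PGame)
    (IH : ∀ y : PGame, (∀ i, C (y.moveLeft i)) → (∀ j, C (y.moveRight j)) → C y) : C x :=
  x.rec fun l r L R => IH (mk l r L R)

end SetTheory.PGame

namespace MisereDicot

universe u

lemma leftWinsFirst_iff (G : PGame) :
    LeftWinsFirst G ↔ IsEmpty G.LeftMoves ∨ ∃ i, ¬ RightWinsFirst (G.moveLeft i) := by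
  rw [LeftWinsFirst]

lemma rightWinsFirst_iff (G : PGame) :
    RightWinsFirst G ↔ IsEmpty G.RightMoves ∨ ∃ j, ¬ LeftWinsFirst (G.moveRight j) := by
  rw [RightWinsFirst]

lemma leftWinsFirst_add_iff (x y : PGame) :
    LeftWinsFirst (x + y) ↔ (IsEmpty x.LeftMoves ∧ IsEmpty y.LeftMoves) ∨
      (∃ i, ¬ RightWinsFirst (x.moveLeft i + y)) ∨ ∃ i, ¬ RightWinsFirst (x + y.moveLeft i) := by
  cases x; cases y
  rw [leftWinsFirst_iff]
  exact or_congr isEmpty_sum Sum.exists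

lemma rightWinsFirst_add_iff (x y : PGame) :
    RightWinsFirst (x + y) ↔ (IsEmpty x.RightMoves ∧ IsEmpty y.RightMoves) ∨
      (∃ j, ¬ LeftWinsFirst (x.moveRight j + y)) ∨ ∃ j, ¬ LeftWinsFirst (x + y.moveRight j) := by
  cases x; cases y
  rw [rightWinsFirst_iff]
  exact or_congr isEmpty_sum Sum.exists

lemma outcome_le_iff {G H : PGame} : outcome G ≤ outcome H ↔
    (LeftWinsFirst G → LeftWinsFirst H) ∧ (RightWinsFirst H → RightWinsFirst G) := by
  show _ ∨ _ ∨ _ ↔ _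
  unfold outcome
  split_ifs <;> simp_all

lemma outcome_eq_iff {G H : PGame} : outcome G = outcome H ↔
    (LeftWinsFirst G ↔ LeftWinsFirst H) ∧ (RightWinsFirst G ↔ RightWinsFirst H) := by
  unfold outcome
  split_ifs <;> simp_all

lemma outcome_eq_L_or_P_iff {G : PGame} :
    (outcome G = MOutcome.L ∨ outcome G = MOutcome.P) ↔ ¬ RightWinsFirst G := by
  unfold outcome
  split_ifs <;> simp_all

lemma IsShort.moveLeft {X : PGame} (hX : IsShort X) (i : X.LeftMoves) : IsShort (X.moveLeft i) :=
  fun _ h => hX _ (h.tail (.moveLeft i))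

lemma IsShort.moveRight {X : PGame} (hX : IsShort X) (j : X.RightMoves) :
    IsShort (X.moveRight j) :=
  fun _ h => hX _ (h.tail (.moveRight j))

lemma Dicot.moveLeft {X : PGame} (hX : Dicot X) (i : X.LeftMoves) : Dicot (X.moveLeft i) :=
  fun _ h => hX _ (h.tail (.moveLeft i))

lemma Dicot.moveRight {X : PGame} (hX : Dicot X) (j : X.RightMoves) : Dicot (X.moveRight j) :=
  fun _ h => hX _ (h.tail (.moveRight j))

def IsMoveless (B : PGame) : Prop := IsEmpty B.LeftMoves ∧ IsEmpty B.RightMoves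

lemma isMoveless_zero : IsMoveless 0 :=
  ⟨⟨PEmpty.elim⟩, ⟨PEmpty.elim⟩⟩

lemma Dicot.isMoveless {X : PGame} (hX : Dicot X) (h : IsEmpty X.LeftMoves) : IsMoveless X :=
  ⟨h, (hX X .refl).mp h⟩

lemma IsMoveless.of_identical {x y : PGame} (h : x.Identical y) (hy : IsMoveless y) :
    IsMoveless x := by
  cases x; cases y
  obtain ⟨⟨hL, -⟩, ⟨hR, -⟩⟩ := h
  exact ⟨⟨fun i => hy.1.false (hL i).choose⟩, ⟨fun j => hy.2.false (hR j).choose⟩⟩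

lemma exists_isMoveless_moveRight_of_identical {x y : PGame} (h : x.Identical y)
    {j : y.RightMoves} (hj : (y.moveRight j).Identical 0) : ∃ i, IsMoveless (x.moveRight i) := by
  cases x; cases y
  obtain ⟨i, hi⟩ := h.2.2 j
  exact ⟨i, (isMoveless_zero.of_identical hj).of_identical hi⟩

lemma winsFirst_moveless_add {B : PGame} (hB : IsMoveless B) (X : PGame) :
    (LeftWinsFirst (B + X) ↔ LeftWinsFirst X) ∧ (RightWinsFirst (B + X) ↔ RightWinsFirst X) := by
  induction X using moveRecOn with
  | IH X ihL ihR =>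
    rw [leftWinsFirst_add_iff, rightWinsFirst_add_iff, leftWinsFirst_iff, rightWinsFirst_iff]
    simp [ihL, ihR, hB.1, hB.2]

lemma winsFirst_add_moveless {B : PGame} (hB : IsMoveless B) (Y : PGame) :
    (LeftWinsFirst (Y + B) ↔ LeftWinsFirst Y) ∧ (RightWinsFirst (Y + B) ↔ RightWinsFirst Y) := by
  induction Y using moveRecOn with
  | IH Y ihL ihR =>
    rw [leftWinsFirst_add_iff, rightWinsFirst_add_iff, leftWinsFirst_iff, rightWinsFirst_iff]
    simp [ihL, ihR, hB.1, hB.2]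

lemma not_rightWinsFirst_star : ¬ RightWinsFirst star := by
  rw [rightWinsFirst_iff]
  rintro (h | ⟨_, h⟩)
  · exact h.false PUnit.unit
  · exact h ((leftWinsFirst_iff 0).2 (.inl isMoveless_zero.1))

lemma dge_zero_iff {G : PGame} : Dge G 0 ↔ ∀ X, IsShort X → Dicot X →
    (LeftWinsFirst X → LeftWinsFirst (G + X)) ∧ (RightWinsFirst (G + X) → RightWinsFirst X) := by
  refine forall₃_congr fun X _ _ => ?_
  rw [outcome_le_iff, (winsFirst_moveless_add isMoveless_zero X).1,
    (winsFirst_moveless_add isMoveless_zero X).2]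

section Replacement

variable {l l' r : Type u} {L : l → PGame} {L' : l' → PGame} {R : r → PGame}

theorem dge_zero_of_winning_leftMove (hG : Dge (.mk l r L R) 0) {k : l'}
    (hk : ¬ RightWinsFirst (L' k)) : Dge (.mk l' r L' R) 0 := by
  rw [dge_zero_iff] at hG ⊢
  intro X
  induction X using moveRecOn with
  | IH X ihL ihR =>
    intro hXs hXd
    constructor
    · rw [leftWinsFirst_iff, leftWinsFirst_add_iff]
      rintro (hX | ⟨i, hi⟩)
      · exact .inr (.inl ⟨k, by rwa [(winsFirst_add_moveless (hXd.isMoveless hX) _).2]⟩)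
      · exact .inr (.inr ⟨i, mt (ihL i (hXs.moveLeft i) (hXd.moveLeft i)).2 hi⟩)
    · rw [rightWinsFirst_add_iff]
      rintro (⟨-, hX⟩ | ⟨j, hj⟩ | ⟨j, hj⟩)
      · exact (rightWinsFirst_iff X).2 (.inl hX)
      · exact (hG X hXs hXd).2 ((rightWinsFirst_add_iff _ _).2 (.inr (.inl ⟨j, hj⟩)))
      · exact (rightWinsFirst_iff X).2
          (.inr ⟨j, mt (ihR j (hXs.moveRight j) (hXd.moveRight j)).1 hj⟩)

lemma leftWinsFirst_add_of_reversible_through_zero (hK : Dge (.mk l' r L' R) 0)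
    (hcover : ∀ i, (∃ k, L' k = L i) ∨ ∃ j, IsMoveless ((L i).moveRight j))
    {X : PGame} (hXs : IsShort X) (hXd : Dicot X)
    (ih : ∀ i, RightWinsFirst (.mk l' r L' R + X.moveLeft i) →
      RightWinsFirst (.mk l r L R + X.moveLeft i)) :
    LeftWinsFirst (.mk l r L R + X) → LeftWinsFirst (.mk l' r L' R + X) := by
  have hKX := (dge_zero_iff.1 hK X hXs hXd).1
  rw [leftWinsFirst_add_iff]
  rintro (⟨-, hX⟩ | ⟨i, hi⟩ | ⟨i, hi⟩)
  · exact hKX ((leftWinsFirst_iff X).2 (.inl hX))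
  · rcases hcover i with ⟨k, hk⟩ | ⟨j, hj⟩
    · exact (leftWinsFirst_add_iff _ _).2
        (.inr (.inl ⟨k, show ¬ RightWinsFirst (L' k + X) from hk ▸ hi⟩))
    · have hBX : LeftWinsFirst ((L i).moveRight j + X) := by
        by_contra h
        exact hi ((rightWinsFirst_add_iff _ _).2 (.inr (.inl ⟨j, h⟩)))
      exact hKX ((winsFirst_moveless_add hj X).1.1 hBX)
  · exact (leftWinsFirst_add_iff _ _).2 (.inr (.inr ⟨i, mt (ih i) hi⟩))

lemma rightWinsFirst_add_of_rightMoves_eq {X : PGame}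
    (ih : ∀ j, LeftWinsFirst (.mk l' r L' R + X.moveRight j) →
      LeftWinsFirst (.mk l r L R + X.moveRight j)) :
    RightWinsFirst (.mk l r L R + X) → RightWinsFirst (.mk l' r L' R + X) := by
  rw [rightWinsFirst_add_iff, rightWinsFirst_add_iff]
  rintro (hX | ⟨j, hj⟩ | ⟨j, hj⟩)
  · exact .inl hX
  · exact .inr (.inl ⟨j, hj⟩)
  · exact .inr (.inr ⟨j, mt (ih j) hj⟩)

theorem deq_of_reversible_through_zero (hG : Dge (.mk l r L R) 0) (hK : Dge (.mk l' r L' R) 0)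
    (hGK : ∀ i, (∃ k, L' k = L i) ∨ ∃ j, IsMoveless ((L i).moveRight j))
    (hKG : ∀ k, (∃ i, L i = L' k) ∨ ∃ j, IsMoveless ((L' k).moveRight j)) :
    Deq (.mk l r L R) (.mk l' r L' R) := by
  suffices ∀ X, IsShort X → Dicot X →
      (LeftWinsFirst (.mk l r L R + X) ↔ LeftWinsFirst (.mk l' r L' R + X)) ∧
      (RightWinsFirst (.mk l r L R + X) ↔ RightWinsFirst (.mk l' r L' R + X)) from
    fun X hXs hXd => outcome_eq_iff.2 (this X hXs hXd)
  intro X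
  induction X using moveRecOn with
  | IH X ihL ihR =>
    intro hXs hXd
    have ihL' i := ihL i (hXs.moveLeft i) (hXd.moveLeft i)
    have ihR' j := ihR j (hXs.moveRight j) (hXd.moveRight j)
    exact ⟨⟨leftWinsFirst_add_of_reversible_through_zero hK hGK hXs hXd fun i => (ihL' i).2.2,
        leftWinsFirst_add_of_reversible_through_zero hG hKG hXs hXd fun i => (ihL' i).2.1⟩,
      ⟨rightWinsFirst_add_of_rightMoves_eq fun j => (ihR' j).1.2,
        rightWinsFirst_add_of_rightMoves_eq fun j => (ihR' j).1.1⟩⟩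

end Replacement

/-- Atomic reversibility: let `A = xL iA` be a left option of `G`
reversible through `B = 0`.  (1) If some other left option is a winning first move
for Left, then `A` may be removed; (2) if `A` is the only winning first move for
Left among the left options, then `A` may be replaced by `*`. -/
theorem stmt11 (xl xr : Type) (xL : xl → PGame) (xR : xr → PGame)
    (hs : IsShort (PGame.mk xl xr xL xR)) (hd : Dicot (PGame.mk xl xr xL xR))
    (iA : xl) (j : (xL iA).RightMoves) (hB0 : ((xL iA).moveRight j).Identical 0)
    (hrev : Dge (PGame.mk xl xr xL xR) 0) :
    ((∃ i, ¬ (xL i).Identical (xL iA) ∧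
        (outcome (xL i) = MOutcome.L ∨ outcome (xL i) = MOutcome.P)) →
      Deq (PGame.mk xl xr xL xR)
        (PGame.mk {i : xl // ¬ (xL i).Identical (xL iA)} xr (fun i => xL i.1) xR)) ∧
    (((outcome (xL iA) = MOutcome.L ∨ outcome (xL iA) = MOutcome.P) ∧
        (∀ i, (outcome (xL i) = MOutcome.L ∨ outcome (xL i) = MOutcome.P) →
          (xL i).Identical (xL iA))) →
      Deq (PGame.mk xl xr xL xR)
        (PGame.mk (PUnit ⊕ {i : xl // ¬ (xL i).Identical (xL iA)}) xr
          (Sum.elim (fun _ => star) (fun i => xL i.1)) xR)) := by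
  have hcover (i : xl) : (∃ k : {i : xl // ¬ (xL i).Identical (xL iA)}, xL k.1 = xL i) ∨
      ∃ j, IsMoveless ((xL i).moveRight j) := by
    by_cases hi : (xL i).Identical (xL iA)
    · exact .inr (exists_isMoveless_moveRight_of_identical hi hB0)
    · exact .inl ⟨⟨i, hi⟩, rfl⟩
  constructor
  · rintro ⟨i, hi, hwin⟩
    exact deq_of_reversible_through_zero hrev
      (dge_zero_of_winning_leftMove hrev (k := ⟨i, hi⟩) (outcome_eq_L_or_P_iff.1 hwin))
      hcover fun k => .inl ⟨k.1, rfl⟩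
  · rintro -
    refine deq_of_reversible_through_zero hrev
      (dge_zero_of_winning_leftMove hrev (k := .inl PUnit.unit) not_rightWinsFirst_star) ?_ ?_
    · intro i
      rcases hcover i with ⟨k, hk⟩ | hA
      · exact .inl ⟨.inr k, hk⟩
      · exact .inr hA
    · rintro (_ | k)
      · exact .inr ⟨PUnit.unit, isMoveless_zero⟩
      · exact .inl ⟨k.1, rfl⟩

end MisereDicot
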